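/- Let P be the 3×3 permutation matrix exchanging the second and third standard basis vectors, and define κ(A) = −P·Aᵀ·P for A a 3×3 complex matrix. Then for all (s,t) ∈ ℝ² and all λ ∈ ℂ∖{0}: κ(λ·α₁′ + α₀′) = (−λ)·α₁′ + α₀′, κ(λ^{−1}·α₋₁″ + α₀″) = (−λ)^{−1}·α₋₁″ + α₀″, and κ(τ(λ)) = −τ(−λ). That is, the loop of connection forms α_λ satisfies κ(α_λ) = α_{−λ} and the polynomial Killing field τ satisfies κ(τ(λ)) = −τ(−λ), the extra ℤ₂-symmetry which induces the holomorphic involution on the spectral curve. -/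

import Mathlib

noncomputable section

open Complex


section Fin3Helpers
open Matrix
variable {α : Type*}

private lemma smul_fin3 [Mul α] (x a b c d e f g h i : α) :
    x • (!![a,b,c;d,e,f;g,h,i] : Matrix (Fin 3) (Fin 3) α) =
      !![x*a, x*b, x*c; x*d, x*e, x*f; x*g, x*h, x*i] := by
  ext p q; fin_cases p <;> fin_cases q <;> rfl

private lemma transpose_fin3 (a b c d e f g h i : α) :
    (!![a,b,c;d,e,f;g,h,i] : Matrix (Fin 3) (Fin 3) α)ᵀ = !![a,d,g;b,e,h;c,f,i] := by
  ext p q; fin_cases p <;> fin_cases q <;> rfl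

private lemma add_fin3 [Add α] (a b c d e f g h i a' b' c' d' e' f' g' h' i' : α) :
    (!![a,b,c;d,e,f;g,h,i] : Matrix (Fin 3) (Fin 3) α) + !![a',b',c';d',e',f';g',h',i'] =
      !![a+a', b+b', c+c'; d+d', e+e', f+f'; g+g', h+h', i+i'] := by
  ext p q; fin_cases p <;> fin_cases q <;> rfl

private lemma neg_fin3 [Neg α] (a b c d e f g h i : α) :
    -(!![a,b,c;d,e,f;g,h,i] : Matrix (Fin 3) (Fin 3) α) = !![-a,-b,-c;-d,-e,-f;-g,-h,-i] := by
  ext p q; fin_cases p <;> fin_cases q <;> rfl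

private lemma eq_fin3 {a b c d e f g h i a' b' c' d' e' f' g' h' i' : α}
    (h1 : a = a') (h2 : b = b') (h3 : c = c') (h4 : d = d') (h5 : e = e') (h6 : f = f')
    (h7 : g = g') (h8 : h = h') (h9 : i = i') :
    (!![a,b,c;d,e,f;g,h,i] : Matrix (Fin 3) (Fin 3) α) = !![a',b',c';d',e',f';g',h',i'] := by
  subst_vars; rfl

end Fin3Helpers

/-- equations (6.23)–(6.24) of the paper. With
`κ(A) = −P Aᵀ P` where `P` exchanges the second and third basis vectors, one has
`κ(α_λ) = α_{−λ}` and `κ(τ(λ)) = −τ(−λ)`: the extra `ℤ₂`-symmetry inducing the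
holomorphic involution on the spectral curve. -/
theorem stmt19
    (θ B C : ℝ) (β₁ β₂ β₃ γ₁ γ₂ γ₃ a b c : ℝ)
    (hβ₁ : β₁ = Real.cos θ / Real.sqrt 2 - Real.sin θ / Real.sqrt 6)
    (hβ₂ : β₂ = -(Real.cos θ / Real.sqrt 2) - Real.sin θ / Real.sqrt 6)
    (hβ₃ : β₃ = 2 * Real.sin θ / Real.sqrt 6)
    (hγ₁ : γ₁ = -(Real.cos θ / Real.sqrt 6) - Real.sin θ / Real.sqrt 2)
    (hγ₂ : γ₂ = -(Real.cos θ / Real.sqrt 6) + Real.sin θ / Real.sqrt 2)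
    (hγ₃ : γ₃ = 2 * Real.cos θ / Real.sqrt 6)
    (ha : a = 1 / 6) (hb : b = -(1 / 2) * (β₁ * β₂ * β₃)) (hc : c = -(1 / 2) * (γ₁ * γ₂ * γ₃))
    (v w v' w' v'' w'' : ℝ → ℝ)
    (hv : ∀ s, HasDerivAt v (v' s) s) (hv' : ∀ s, HasDerivAt v' (v'' s) s)
    (hw : ∀ t, HasDerivAt w (w' t) t) (hw' : ∀ t, HasDerivAt w' (w'' t) t)
    (hvB : ∀ s, (v' s) ^ 2 =
      4 * ((β₁ * v s + 1) * ((β₂ * v s + 1) * (β₃ * v s + 1)) - B ^ 2))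
    (hvB' : ∀ s, v'' s =
      2 * deriv (fun x : ℝ => (β₁ * x + 1) * ((β₂ * x + 1) * (β₃ * x + 1))) (v s))
    (hwC : ∀ t, (w' t) ^ 2 =
      4 * ((γ₁ * w t + 1) * ((γ₂ * w t + 1) * (γ₃ * w t + 1)) - C ^ 2))
    (hwC' : ∀ t, w'' t =
      2 * deriv (fun x : ℝ => (γ₁ * x + 1) * ((γ₂ * x + 1) * (γ₃ * x + 1))) (w t))
    (f : ℝ → ℝ → ℝ) (hf : ∀ s t, f s t = a + b * v s + c * w t)
    (hfpos : ∀ s t, 0 < f s t)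
    (ξ : ℂ) (hξ : ξ = ((c * C : ℝ) : ℂ) + Complex.I * ((b * B : ℝ) : ℂ)) (hξ0 : ξ ≠ 0)
    (ρ : ℝ) (hρ : ρ = ‖ξ‖)
    (ϑ : ℝ) (hϑ : ξ = ((ρ : ℝ) : ℂ) * Complex.exp (Complex.I * ((ϑ : ℝ) : ℂ)))
    (ξ3 : ℂ) (hξ3 : ξ3 = ((ρ ^ ((1 : ℝ) / 3) : ℝ) : ℂ) * Complex.exp (Complex.I * ((ϑ / 3 : ℝ) : ℂ)))
    (g : ℝ → ℝ → ℂ)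
    (hg : ∀ s t, g s t =
      (((-(b * v' s) : ℝ) : ℂ) + Complex.I * ((c * w' t : ℝ) : ℂ)) /
        (2 * ((Real.sqrt (f s t) : ℝ) : ℂ)))
    (h : ℝ → ℝ → ℝ)
    (hh : ∀ s t, h s t = (-(b * v'' s) + c * w'' t) / (12 * f s t))
    (Lz Lzb : ℝ → ℝ → ℂ)
    (hLz : ∀ s t, Lz s t = (1 / (2 * ξ3)) *
      ((((b * v' s : ℝ) : ℂ) - Complex.I * ((c * w' t : ℝ) : ℂ)) / ((f s t : ℝ) : ℂ)))
    (hLzb : ∀ s t, Lzb s t = (1 / (2 * (starRingEnd ℂ) ξ3)) *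
      ((((b * v' s : ℝ) : ℂ) + Complex.I * ((c * w' t : ℝ) : ℂ)) / ((f s t : ℝ) : ℂ)))
    (α₁' α₀' αm₁'' α₀'' : ℝ → ℝ → Matrix (Fin 3) (Fin 3) ℂ)
    (hα₁' : ∀ s t, α₁' s t = (((ρ ^ (-(1 : ℝ) / 3) : ℝ) : ℂ)) •
      !![0, 0, ((Real.sqrt (f s t) : ℝ) : ℂ);
         ((Real.sqrt (f s t) : ℝ) : ℂ), 0, 0;
         0, ((ρ / f s t : ℝ) : ℂ), 0])
    (hα₀' : ∀ s t, α₀' s t = (1 / 2 : ℂ) •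
      !![0, 0, 0; 0, Lz s t, 0; 0, 0, -Lz s t])
    (hαm₁'' : ∀ s t, αm₁'' s t = -((((ρ ^ (-(1 : ℝ) / 3) : ℝ) : ℂ)) •
      !![0, ((Real.sqrt (f s t) : ℝ) : ℂ), 0;
         0, 0, ((ρ / f s t : ℝ) : ℂ);
         ((Real.sqrt (f s t) : ℝ) : ℂ), 0, 0]))
    (hα₀'' : ∀ s t, α₀'' s t = (1 / 2 : ℂ) •
      !![0, 0, 0; 0, -Lzb s t, 0; 0, 0, Lzb s t])
    (τ₂ τ₁ τ₀ τm₁ τm₂ : ℝ → ℝ → Matrix (Fin 3) (Fin 3) ℂ)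
    (hτ₂ : ∀ s t, τ₂ s t = (Complex.I * Complex.exp (Complex.I * ((2 * ϑ / 3 : ℝ) : ℂ))) •
      !![0, ((ρ / Real.sqrt (f s t) : ℝ) : ℂ), 0;
         0, 0, ((f s t : ℝ) : ℂ);
         ((ρ / Real.sqrt (f s t) : ℝ) : ℂ), 0, 0])
    (hτ₁ : ∀ s t, τ₁ s t = (Complex.I * Complex.exp (Complex.I * ((ϑ / 3 : ℝ) : ℂ))) •
      !![0, 0, g s t; -(g s t), 0, 0; 0, 0, 0])
    (hτ₀ : ∀ s t, τ₀ s t = Complex.I •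
      !![((2 * h s t : ℝ) : ℂ), 0, 0;
         0, ((-(h s t) : ℝ) : ℂ), 0;
         0, 0, ((-(h s t) : ℝ) : ℂ)])
    (hτm₁ : ∀ s t, τm₁ s t = (Complex.I * Complex.exp (-(Complex.I * ((ϑ / 3 : ℝ) : ℂ)))) •
      !![0, -((starRingEnd ℂ) (g s t)), 0;
         0, 0, 0;
         (starRingEnd ℂ) (g s t), 0, 0])
    (hτm₂ : ∀ s t, τm₂ s t = (Complex.I * Complex.exp (-(Complex.I * ((2 * ϑ / 3 : ℝ) : ℂ)))) •
      !![0, 0, ((ρ / Real.sqrt (f s t) : ℝ) : ℂ);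
         ((ρ / Real.sqrt (f s t) : ℝ) : ℂ), 0, 0;
         0, ((f s t : ℝ) : ℂ), 0])
    (τ : ℂ → ℝ → ℝ → Matrix (Fin 3) (Fin 3) ℂ)
    (hτ : ∀ (l : ℂ) (s t : ℝ), τ l s t =
      l ^ 2 • τ₂ s t + l • τ₁ s t + τ₀ s t + l⁻¹ • τm₁ s t + (l ^ 2)⁻¹ • τm₂ s t)
    (P : Matrix (Fin 3) (Fin 3) ℂ) (hP : P = !![1, 0, 0; 0, 0, 1; 0, 1, 0]) :
    ∀ (l : ℂ), l ≠ 0 → ∀ s t : ℝ,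
      -(P * Matrix.transpose (l • α₁' s t + α₀' s t) * P)
        = (-l) • α₁' s t + α₀' s t ∧
      -(P * Matrix.transpose (l⁻¹ • αm₁'' s t + α₀'' s t) * P)
        = (-l)⁻¹ • αm₁'' s t + α₀'' s t ∧
      -(P * Matrix.transpose (τ l s t) * P) = -(τ (-l) s t) := by
  intro l hl s t
  refine ⟨?_, ?_, ?_⟩
  · rw [hP, hα₁' s t, hα₀' s t]
    simp only [smul_fin3, smul_neg, neg_fin3, add_fin3, transpose_fin3, Matrix.mul_fin_three]
    exact eq_fin3 (by ring) (by ring) (by ring) (by ring) (by ring) (by ring)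
      (by ring) (by ring) (by ring)
  · rw [hP, hαm₁'' s t, hα₀'' s t, inv_neg]
    simp only [smul_fin3, smul_neg, neg_fin3, add_fin3, transpose_fin3, Matrix.mul_fin_three]
    exact eq_fin3 (by ring) (by ring) (by ring) (by ring) (by ring) (by ring)
      (by ring) (by ring) (by ring)
  · rw [hP, hτ l s t, hτ (-l) s t, hτ₂ s t, hτ₁ s t, hτ₀ s t, hτm₁ s t, hτm₂ s t,
      inv_neg, neg_sq]
    simp only [smul_fin3, smul_neg, neg_fin3, add_fin3, transpose_fin3, Matrix.mul_fin_three]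
    exact eq_fin3 (by ring) (by ring) (by ring) (by ring) (by ring) (by ring)
      (by ring) (by ring) (by ring)
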